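/- Let c > 0, let g : [0,∞) → ℝ be nondecreasing and Lipschitz continuous with g(0) = 0 and g(u) ≤ c·u for all u ≥ 0, and let y : [0,∞) → ℝ be càdlàg. Suppose the càdlàg function x : [0,∞) → ℝ satisfies x(t) = y(t) + c ∫_0^t (x(s))⁻ ds − ∫_0^t g((x(s))⁺) ds for all t ≥ 0, and the càdlàg function z : [0,∞) → ℝ satisfies z(t) = y(t) − c ∫_0^t z(s) ds for all t ≥ 0. Then x(t) ≥ z(t) for all t ≥ 0. -/

import Mathlib

open Filter MeasureTheory

/-- A function `y : [0,∞) → ℝ` (encoded on all of `ℝ`, with only its values on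
`[0,∞)` relevant) is càdlàg: right-continuous at every `t ≥ 0` and with a finite
left limit at every `t > 0`. -/
def Cadlag (y : ℝ → ℝ) : Prop :=
  (∀ t : ℝ, 0 ≤ t → ContinuousWithinAt y (Set.Ici t) t) ∧
  (∀ t : ℝ, 0 < t → ∃ l : ℝ, Tendsto y (nhdsWithin t (Set.Iio t)) (nhds l))

/-!
The difference `w = x - z` satisfies `w(t) = ∫₀ᵗ (c x⁻ - g(x⁺) + c z)`, and `g(x⁺) ≤ c x⁺`
makes the integrand at least `-c w`. So `w` is a primitive of `h - c w` with `h ≥ 0`. With the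
nondecreasing `H = ∫₀ᵗ h` and `W = ∫₀ᵗ w` one has `w = H - c W` and `(e^{ct} W)' = e^{ct} H`,
hence `c e^{cT} W(T) = ∫₀ᵀ c e^{ct} H ≤ (e^{cT} - 1) H(T)`, so `c W(T) ≤ H(T)` and `w(T) ≥ 0`.
Passing through `W` avoids differentiating `w`, which is merely absolutely continuous.
-/

open Set Bornology Topology

theorem measurable_of_forall_continuousWithinAt_Ici {β : Type*} [TopologicalSpace β]
    [TopologicalSpace.PseudoMetrizableSpace β] [MeasurableSpace β] [BorelSpace β]
    {f : ℝ → β} (hf : ∀ t, ContinuousWithinAt f (Ici t) t) : Measurable f := by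
  set u : ℕ → ℝ → ℝ := fun n t => ⌈t * (n + 1)⌉ / (n + 1)
  have hu_ge (n : ℕ) (t : ℝ) : t ≤ u n t := by
    rw [le_div_iff₀ (by positivity)]
    exact Int.le_ceil _
  have hu_le (n : ℕ) (t : ℝ) : u n t ≤ t + 1 / (n + 1) := by
    rw [div_le_iff₀ (by positivity), add_mul, one_div_mul_cancel (by positivity)]
    exact (Int.ceil_lt_add_one _).le
  have hu_tendsto (t : ℝ) : Tendsto (fun n => u n t) atTop (𝓝 t) := by
    have h : Tendsto (fun n : ℕ => t + 1 / ((n : ℝ) + 1)) atTop (𝓝 t) := by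
      simpa using tendsto_const_nhds.add (tendsto_one_div_add_atTop_nhds_zero_nat (𝕜 := ℝ))
    exact tendsto_of_tendsto_of_tendsto_of_le_of_le tendsto_const_nhds h (hu_ge · t) (hu_le · t)
  refine measurable_of_tendsto_metrizable (f := fun n => f ∘ u n) (fun n => ?_)
    (tendsto_pi_nhds.2 fun t => ?_)
  · exact (measurable_of_countable fun k : ℤ => f (k / (n + 1))).comp
      (Int.measurable_ceil.comp (measurable_id.mul_const _))
  · exact (hf t).tendsto.comp (tendsto_nhdsWithin_of_tendsto_nhds_of_eventually_within _
      (hu_tendsto t) (Eventually.of_forall (hu_ge · t)))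

namespace Cadlag

variable {f : ℝ → ℝ}

theorem comp (hf : Cadlag f) {φ : ℝ → ℝ} (hφ : Continuous φ) : Cadlag (φ ∘ f) :=
  ⟨fun t ht => hφ.continuousAt.comp_continuousWithinAt (hf.1 t ht),
    fun t ht => let ⟨l, hl⟩ := hf.2 t ht; ⟨φ l, (hφ.tendsto l).comp hl⟩⟩

theorem continuousWithinAt_comp_max (hf : Cadlag f) (t : ℝ) :
    ContinuousWithinAt (fun s => f (max s 0)) (Ici t) t :=
  (hf.1 _ (le_max_right t 0)).comp (f := fun s => max s 0)
    (continuous_id.max continuous_const).continuousWithinAt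
    fun s (hs : t ≤ s) => (max_le_max_right 0 hs : max t 0 ≤ max s 0)

theorem exists_mem_nhdsWithin_isBounded_image (hf : Cadlag f) {t : ℝ} (ht : 0 ≤ t) :
    ∃ U ∈ 𝓝[Ici 0] t, IsBounded (f '' U) := by
  obtain ⟨U, hU, hUb⟩ := Metric.exists_isBounded_image_of_tendsto (hf.1 t ht)
  obtain ⟨V, hV, hVb⟩ : ∃ V ∈ 𝓝[<] t, IsBounded (f '' (Ici 0 ∩ V)) := by
    rcases ht.eq_or_lt with rfl | ht
    · exact ⟨Iio 0, self_mem_nhdsWithin, by simp [Ici_inter_Iio]⟩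
    · obtain ⟨l, hl⟩ := hf.2 t ht
      obtain ⟨V, hV, hVb⟩ := Metric.exists_isBounded_image_of_tendsto hl
      exact ⟨V, hV, hVb.subset (image_mono inter_subset_right)⟩
  refine ⟨Ici 0 ∩ (U ∪ V), inter_mem_nhdsWithin _ ?_, ?_⟩
  · rw [← nhdsLT_sup_nhdsGE]
    exact ⟨mem_of_superset hV subset_union_right, mem_of_superset hU subset_union_left⟩
  · rw [inter_union_distrib_left, image_union]
    exact (hUb.subset (image_mono inter_subset_right)).union hVb

theorem isBounded_image (hf : Cadlag f) {K : Set ℝ} (hK : IsCompact K) (hK0 : K ⊆ Ici 0) :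
    IsBounded (f '' K) := by
  refine hK.induction_on (p := fun s => IsBounded (f '' s)) (by simp)
    (fun s u hsu hu => hu.subset (image_mono hsu))
    (fun s u hs hu => by simpa only [image_union] using hs.union hu) fun t ht => ?_
  obtain ⟨U, hU, hUb⟩ := hf.exists_mem_nhdsWithin_isBounded_image (hK0 ht)
  exact ⟨U, nhdsWithin_mono t hK0 hU, hUb⟩

theorem intervalIntegrable_comp_max (hf : Cadlag f) (a b : ℝ) :
    IntervalIntegrable (fun s => f (max s 0)) volume a b := by
  have hmax : Continuous fun s : ℝ => max s 0 := continuous_id.max continuous_const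
  obtain ⟨M, hM⟩ := (hf.isBounded_image ((isCompact_uIcc (a := a) (b := b)).image hmax)
    (image_subset_iff.2 fun s _ => le_max_right s 0)).exists_norm_le
  have hmeas := measurable_of_forall_continuousWithinAt_Ici hf.continuousWithinAt_comp_max
  rw [intervalIntegrable_iff']
  exact Measure.integrableOn_of_bounded measure_Icc_lt_top.ne hmeas.aestronglyMeasurable
    (ae_restrict_of_forall_mem measurableSet_uIcc fun s hs => hM _ ⟨_, ⟨s, hs, rfl⟩, rfl⟩)

end Cadlag

theorem intervalIntegral.integral_comp_max_zero {E : Type*} [NormedAddCommGroup E]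
    [NormedSpace ℝ E] {t : ℝ} (ht : 0 ≤ t) (F : ℝ → E) :
    ∫ s in 0..t, F (max s 0) = ∫ s in 0..t, F s :=
  intervalIntegral.integral_congr fun s hs => by
    rw [max_eq_left (uIcc_of_le ht ▸ hs).1]

open Real in
theorem mul_le_of_hasDerivAt_exp_mul {c T : ℝ} (hc : 0 ≤ c) (hT : 0 ≤ T) {H W : ℝ → ℝ}
    (hH : Continuous H) (hW : Continuous W) (hW0 : W 0 = 0)
    (hH_le : ∀ t ∈ Icc 0 T, H t ≤ H T) (hH_nonneg : 0 ≤ H T)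
    (hderiv : ∀ t ∈ Ioo 0 T, HasDerivAt (fun t => exp (c * t) * W t) (exp (c * t) * H t) t) :
    c * W T ≤ H T := by
  have hexpW : exp (c * T) * W T = ∫ t in 0..T, exp (c * t) * H t := by
    rw [intervalIntegral.integral_eq_sub_of_hasDerivAt_of_le hT (by fun_prop) hderiv
      (Continuous.intervalIntegrable (by fun_prop) _ _)]
    simp [hW0]
  have hexp_integral : ∫ t in 0..T, exp (c * t) * c = exp (c * T) - 1 := by
    rw [intervalIntegral.integral_eq_sub_of_hasDerivAt
      (fun t _ => by simpa using ((hasDerivAt_id t).const_mul c).exp)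
      (Continuous.intervalIntegrable (by fun_prop) _ _)]
    simp
  have hbound : exp (c * T) * (c * W T) ≤ exp (c * T) * H T := calc
    exp (c * T) * (c * W T) = ∫ t in 0..T, exp (c * t) * c * H t := by
      rw [mul_left_comm, hexpW, ← intervalIntegral.integral_const_mul]
      congr 1 with t
      ring
    _ ≤ ∫ t in 0..T, exp (c * t) * c * H T :=
      intervalIntegral.integral_mono_on hT (Continuous.intervalIntegrable (by fun_prop) _ _)
        (Continuous.intervalIntegrable (by fun_prop) _ _)
        fun t ht => mul_le_mul_of_nonneg_left (hH_le t ht) (by positivity)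
    _ = H T * (exp (c * T) - 1) := by
      rw [intervalIntegral.integral_mul_const, hexp_integral, mul_comm]
    _ ≤ exp (c * T) * H T := by linarith
  exact le_of_mul_le_mul_left hbound (exp_pos _)

open Real in
theorem nonneg_of_eq_integral_of_neg_mul_le {c : ℝ} (hc : 0 ≤ c) {f w : ℝ → ℝ}
    (hf : ∀ a b, IntervalIntegrable f volume a b)
    (hwi : ∀ a b, IntervalIntegrable w volume a b)
    (hfw : ∀ s, 0 ≤ s → -(c * w s) ≤ f s) (hw : ∀ t, 0 ≤ t → w t = ∫ s in 0..t, f s)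
    {T : ℝ} (hT : 0 ≤ T) : 0 ≤ w T := by
  set H : ℝ → ℝ := fun t => ∫ s in 0..t, (f s + c * w s) with hH
  set W : ℝ → ℝ := fun t => ∫ s in 0..t, w s with hW
  have hfcw (a b : ℝ) : IntervalIntegrable (fun s => f s + c * w s) volume a b :=
    (hf a b).add ((hwi a b).const_mul c)
  have hw_eq (t : ℝ) (ht : 0 ≤ t) : w t = H t - c * W t := by
    simp only [hw t ht, hH, hW]
    rw [intervalIntegral.integral_add (hf 0 t) ((hwi 0 t).const_mul c),
      intervalIntegral.integral_const_mul]
    ring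
  have hH_le (t : ℝ) (ht : t ∈ Icc 0 T) : H t ≤ H T := by
    simp only [hH]
    rw [← intervalIntegral.integral_add_adjacent_intervals (hfcw 0 t) (hfcw t T),
      le_add_iff_nonneg_right]
    exact intervalIntegral.integral_nonneg ht.2 fun s hs => by linarith [hfw s (ht.1.trans hs.1)]
  have hw_contAt (t : ℝ) (ht : 0 < t) : ContinuousAt w t :=
    (intervalIntegral.continuous_primitive hf 0).continuousAt.congr
      (eventually_of_mem (Ioi_mem_nhds ht) fun s hs => (hw s (le_of_lt hs)).symm)
  have hderiv (t : ℝ) (ht : t ∈ Ioo 0 T) :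
      HasDerivAt (fun t => exp (c * t) * W t) (exp (c * t) * H t) t := by
    have hWt : HasDerivAt W (w t) t := intervalIntegral.integral_hasDerivAt_right (hwi 0 t)
      (ContinuousAt.stronglyMeasurableAtFilter isOpen_Ioi hw_contAt t ht.1) (hw_contAt t ht.1)
    refine ((((hasDerivAt_id t).const_mul c).exp).mul hWt).congr_deriv ?_
    rw [hw_eq t ht.1.le]
    simp only [id_eq, mul_one]
    ring
  rw [hw_eq T hT, sub_nonneg]
  exact mul_le_of_hasDerivAt_exp_mul hc hT (intervalIntegral.continuous_primitive hfcw 0)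
    (intervalIntegral.continuous_primitive hwi 0) intervalIntegral.integral_same hH_le
    (by simpa [hH] using hH_le 0 ⟨le_rfl, hT⟩) hderiv

theorem Cadlag.sub_comp_max_eq_integral {c : ℝ} {g x y z : ℝ → ℝ} (hx : Cadlag x)
    (hz : Cadlag z) (hg : Continuous fun u => g (max u 0))
    (hxeq : ∀ t, 0 ≤ t →
      x t = y t + c * (∫ s in 0..t, max (-(x s)) 0) - ∫ s in 0..t, g (max (x s) 0))
    (hzeq : ∀ t, 0 ≤ t → z t = y t - c * ∫ s in 0..t, z s) {t : ℝ} (ht : 0 ≤ t) :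
    x t - z t = ∫ s in 0..t,
      (c * max (-(x (max s 0))) 0 - g (max (x (max s 0)) 0) + c * z (max s 0)) := by
  have hint_xneg : IntervalIntegrable (fun s => max (-(x (max s 0))) 0) volume 0 t :=
    (hx.comp (φ := fun u => max (-u) 0) (by fun_prop)).intervalIntegrable_comp_max 0 t
  have hint_gx : IntervalIntegrable (fun s => g (max (x (max s 0)) 0)) volume 0 t :=
    (hx.comp hg).intervalIntegrable_comp_max 0 t
  have hx' (F : ℝ → ℝ) : ∫ s in 0..t, F (x (max s 0)) = ∫ s in 0..t, F (x s) :=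
    intervalIntegral.integral_comp_max_zero ht (F ∘ x)
  rw [intervalIntegral.integral_add ((hint_xneg.const_mul c).sub hint_gx)
      ((hz.intervalIntegrable_comp_max 0 t).const_mul c),
    intervalIntegral.integral_sub (hint_xneg.const_mul c) hint_gx,
    intervalIntegral.integral_const_mul, intervalIntegral.integral_const_mul,
    hx' fun u => max (-u) 0, hx' fun u => g (max u 0),
    intervalIntegral.integral_comp_max_zero ht z, hxeq t ht, hzeq t ht]
  ring

theorem stmt_3_general (c : ℝ) (hc : 0 < c) (g : ℝ → ℝ)
    (hg_lip : ∃ K : NNReal, LipschitzOnWith K g (Set.Ici 0))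
    (hg_le : ∀ u, 0 ≤ u → g u ≤ c * u)
    (y : ℝ → ℝ)
    (x : ℝ → ℝ) (hx : Cadlag x)
    (hxeq : ∀ t, 0 ≤ t →
      x t = y t + c * (∫ s in (0 : ℝ)..t, max (-(x s)) 0)
            - ∫ s in (0 : ℝ)..t, g (max (x s) 0))
    (z : ℝ → ℝ) (hz : Cadlag z)
    (hzeq : ∀ t, 0 ≤ t → z t = y t - c * ∫ s in (0 : ℝ)..t, z s) :
    ∀ t, 0 ≤ t → z t ≤ x t := by
  obtain ⟨K, hK⟩ := hg_lip
  have hg : Continuous fun u => g (max u 0) :=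
    hK.continuousOn.comp_continuous (continuous_id.max continuous_const) fun u => le_max_right u 0
  -- extending `x` and `z` to the left by their value at `0` makes them locally integrable on `ℝ`
  set x' : ℝ → ℝ := fun s => x (max s 0)
  set z' : ℝ → ℝ := fun s => z (max s 0)
  have hint_f (a b : ℝ) : IntervalIntegrable
      (fun s => c * max (-(x' s)) 0 - g (max (x' s) 0) + c * z' s) volume a b :=
    ((hx.comp (φ := fun u => c * max (-u) 0 - g (max u 0))
      ((continuous_const.mul (by fun_prop)).sub hg)).intervalIntegrable_comp_max a b).add
      ((hz.intervalIntegrable_comp_max a b).const_mul c)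
  have hfw (s : ℝ) (_ : 0 ≤ s) :
      -(c * (x' s - z' s)) ≤ c * max (-(x' s)) 0 - g (max (x' s) 0) + c * z' s := by
    nlinarith [max_zero_sub_max_neg_zero_eq_self (x' s), hg_le _ (le_max_right (x' s) 0)]
  have hw (t : ℝ) (ht : 0 ≤ t) : x' t - z' t = ∫ s in 0..t,
      (c * max (-(x' s)) 0 - g (max (x' s) 0) + c * z' s) := by
    simpa only [x', z', max_eq_left ht] using hx.sub_comp_max_eq_integral hz hg hxeq hzeq ht
  intro t ht
  simpa [x', z', max_eq_left ht] using
    nonneg_of_eq_integral_of_neg_mul_le hc.le hint_f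
      (fun a b => (hx.intervalIntegrable_comp_max a b).sub (hz.intervalIntegrable_comp_max a b))
      hfw hw ht

/-- Comparison: if `x` solves
`x(t) = y(t) + c ∫₀ᵗ x(s)⁻ ds − ∫₀ᵗ g(x(s)⁺) ds` with `g(u) ≤ c·u` on `[0,∞)`,
and `z` solves `z(t) = y(t) − c ∫₀ᵗ z(s) ds`, then `x ≥ z` on `[0,∞)`. -/
theorem stmt_3 (c : ℝ) (hc : 0 < c) (g : ℝ → ℝ)
    (hg_mono : MonotoneOn g (Set.Ici 0))
    (hg_lip : ∃ K : NNReal, LipschitzOnWith K g (Set.Ici 0))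
    (hg0 : g 0 = 0)
    (hg_le : ∀ u, 0 ≤ u → g u ≤ c * u)
    (y : ℝ → ℝ) (hy : Cadlag y)
    (x : ℝ → ℝ) (hx : Cadlag x)
    (hxeq : ∀ t, 0 ≤ t →
      x t = y t + c * (∫ s in (0 : ℝ)..t, max (-(x s)) 0)
            - ∫ s in (0 : ℝ)..t, g (max (x s) 0))
    (z : ℝ → ℝ) (hz : Cadlag z)
    (hzeq : ∀ t, 0 ≤ t → z t = y t - c * ∫ s in (0 : ℝ)..t, z s) :
    ∀ t, 0 ≤ t → z t ≤ x t :=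
  stmt_3_general c hc g hg_lip hg_le y x hx hxeq z hz hzeq
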